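/- arXiv:math-ph/0211043 — 2 statements merged into one kernel-verified Lean document; each statement's English description precedes it below -/
import Mathlib

section
/- Let Λ ⊂ ℂ be an additive subgroup, let U, V : ℂ → ℂ be potentials with U = conj(V), let (k₁, k₂) ∈ ℂ², and let ψ = (ψ₁, ψ₂) be a pair of ℝ-differentiable functions ℂ → ℂ satisfying the Dirac equation ∂ψ₂ + U·ψ₁ = 0, ∂̄ψ₁ = V·ψ₂, each component being a Floquet function with quasi-impulses (k₁, k₂) with respect to Λ. Then the pair ψ̂ = (conj∘ψ₂, −conj∘ψ₁) is ℝ-differentiable, satisfies the same Dirac equation ∂ψ̂₂ + U·ψ̂₁ = 0, ∂̄ψ̂₁ = V·ψ̂₂, and each of its components is a Floquet function with quasi-impulses (−conj(k₁), −conj(k₂)) with respect to Λ. -/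
/-- The Wirtinger derivative `∂f(z) = ½(D₁f(z) − i·Dᵢf(z))`. -/
noncomputable def wd (f : ℂ → ℂ) (z : ℂ) : ℂ :=
  (1 / 2) * (fderiv ℝ f z 1 - Complex.I * fderiv ℝ f z Complex.I)

/-- The conjugate Wirtinger derivative `∂̄f(z) = ½(D₁f(z) + i·Dᵢf(z))`. -/
noncomputable def wdbar (f : ℂ → ℂ) (z : ℂ) : ℂ :=
  (1 / 2) * (fderiv ℝ f z 1 + Complex.I * fderiv ℝ f z Complex.I)

/-- `ψ` is a Floquet function with quasi-impulses `(k₁, k₂)` with respect to `Λ`: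
`ψ(z + γ) = exp(2πi(Re γ·k₁ + Im γ·k₂))·ψ(z)` for all `γ ∈ Λ`, `z ∈ ℂ`. -/
def IsFloquet (Λ : AddSubgroup ℂ) (k₁ k₂ : ℂ) (ψ : ℂ → ℂ) : Prop :=
  ∀ γ ∈ Λ, ∀ z : ℂ,
    ψ (z + γ) = Complex.exp (2 * Real.pi * Complex.I * (γ.re * k₁ + γ.im * k₂)) * ψ z

/-!
Conjugation swaps the two Wirtinger derivatives (`∂(conj f) = conj (∂̄ f)`), so with `U = conj V`
the two equations of the Dirac system `∂ψ₂ + Uψ₁ = 0`, `∂̄ψ₁ = Vψ₂` are exchanged by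
`(ψ₁, ψ₂) ↦ (conj ψ₂, −conj ψ₁)`. Conjugating the Floquet multiplier `exp(2πi⟨γ, k⟩)` gives
`exp(2πi⟨γ, −conj k⟩)` because `Re γ` and `Im γ` are real.
-/

open ComplexConjugate

lemma fderiv_conj_apply {E : Type*} [NormedAddCommGroup E] [NormedSpace ℝ E] (f : E → ℂ)
    (z w : E) :
    fderiv ℝ (fun x => conj (f x)) z w = conj (fderiv ℝ f z w) := by
  simp only [← Complex.star_def, fderiv_star]
  rfl

lemma wd_conj (f : ℂ → ℂ) (z : ℂ) : wd (fun x => conj (f x)) z = conj (wdbar f z) := by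
  simp only [wd, wdbar, fderiv_conj_apply, map_mul, map_add, Complex.conj_I, map_div₀, map_one,
    map_ofNat]
  ring

lemma wdbar_conj (f : ℂ → ℂ) (z : ℂ) : wdbar (fun x => conj (f x)) z = conj (wd f z) := by
  simp only [wd, wdbar, fderiv_conj_apply, map_mul, map_sub, Complex.conj_I, map_div₀, map_one,
    map_ofNat]
  ring

lemma wd_neg (f : ℂ → ℂ) (z : ℂ) : wd (fun x => -f x) z = -wd f z := by
  simp only [wd, fderiv_fun_neg, neg_apply]
  ring

def IsDiracSolution (U V ψ₁ ψ₂ : ℂ → ℂ) : Prop :=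
  ∀ z, wd ψ₂ z + U z * ψ₁ z = 0 ∧ wdbar ψ₁ z = V z * ψ₂ z

lemma IsDiracSolution.conj_swap {U V ψ₁ ψ₂ : ℂ → ℂ} (hUV : ∀ z, U z = conj (V z))
    (h : IsDiracSolution U V ψ₁ ψ₂) :
    IsDiracSolution U V (fun z => conj (ψ₂ z)) (fun z => -conj (ψ₁ z)) := by
  intro z
  obtain ⟨hwd, hwdbar⟩ := h z
  constructor
  · rw [wd_neg, wd_conj, hwdbar, hUV, map_mul]
    ring
  · rw [wdbar_conj, eq_neg_of_add_eq_zero_left hwd, hUV, map_neg, map_mul, Complex.conj_conj]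
    ring

lemma IsFloquet.conj {Λ : AddSubgroup ℂ} {k₁ k₂ : ℂ} {ψ : ℂ → ℂ} (h : IsFloquet Λ k₁ k₂ ψ) :
    IsFloquet Λ (-conj k₁) (-conj k₂) (fun z => conj (ψ z)) := by
  intro γ hγ z
  have hmult : Complex.exp (2 * Real.pi * Complex.I * (γ.re * -conj k₁ + γ.im * -conj k₂)) =
      conj (Complex.exp (2 * Real.pi * Complex.I * (γ.re * k₁ + γ.im * k₂))) := by
    rw [← Complex.exp_conj]
    simp only [map_mul, map_add, Complex.conj_ofReal, Complex.conj_I, map_ofNat]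
    ring_nf
  dsimp only
  rw [h γ hγ z, hmult, map_mul]

lemma IsFloquet.neg {Λ : AddSubgroup ℂ} {k₁ k₂ : ℂ} {ψ : ℂ → ℂ} (h : IsFloquet Λ k₁ k₂ ψ) :
    IsFloquet Λ k₁ k₂ (fun z => -ψ z) := by
  intro γ hγ z
  dsimp only
  rw [h γ hγ z, mul_neg]

/-- If `U = conj V` and `ψ = (ψ₁, ψ₂)` solves the Dirac equation
`∂ψ₂ + U·ψ₁ = 0`, `∂̄ψ₁ = V·ψ₂`, each component being a Floquet function with
quasi-impulses `(k₁, k₂)`, then `ψ̂ = (conj ∘ ψ₂, −conj ∘ ψ₁)` is ℝ-differentiable,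
solves the same Dirac equation, and its components are Floquet functions with
quasi-impulses `(−conj k₁, −conj k₂)`. -/
theorem dirac_floquet_antiinvolution
    (Λ : AddSubgroup ℂ) (U V : ℂ → ℂ)
    (hUV : ∀ z, U z = starRingEnd ℂ (V z))
    (k₁ k₂ : ℂ) (ψ₁ ψ₂ : ℂ → ℂ)
    (hψ₁ : Differentiable ℝ ψ₁) (hψ₂ : Differentiable ℝ ψ₂)
    (hDirac : ∀ z, wd ψ₂ z + U z * ψ₁ z = 0 ∧ wdbar ψ₁ z = V z * ψ₂ z)
    (hF₁ : IsFloquet Λ k₁ k₂ ψ₁) (hF₂ : IsFloquet Λ k₁ k₂ ψ₂) :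
    Differentiable ℝ (fun z => starRingEnd ℂ (ψ₂ z)) ∧
    Differentiable ℝ (fun z => -starRingEnd ℂ (ψ₁ z)) ∧
    (∀ z, wd (fun w => -starRingEnd ℂ (ψ₁ w)) z + U z * starRingEnd ℂ (ψ₂ z) = 0 ∧
      wdbar (fun w => starRingEnd ℂ (ψ₂ w)) z = V z * (-starRingEnd ℂ (ψ₁ z))) ∧
    IsFloquet Λ (-starRingEnd ℂ k₁) (-starRingEnd ℂ k₂) (fun z => starRingEnd ℂ (ψ₂ z)) ∧
    IsFloquet Λ (-starRingEnd ℂ k₁) (-starRingEnd ℂ k₂) (fun z => -starRingEnd ℂ (ψ₁ z)) :=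
  ⟨Complex.conjCLE.differentiable.comp hψ₂, (Complex.conjCLE.differentiable.comp hψ₁).neg,
    IsDiracSolution.conj_swap hUV hDirac, hF₂.conj, hF₁.conj.neg⟩
end

section
/- Let u : ℝ → ℂ, λ ∈ ℂ, and let ψ̃₁, ψ̃₂ : ℝ → ℂ be differentiable. Define U : ℂ → ℂ by U(z) = u(Re z) and ψⱼ : ℂ → ℂ by ψⱼ(z) = ψ̃ⱼ(Re z)·exp(λ·Im z) for j = 1, 2. Then ψ = (ψ₁, ψ₂) satisfies the Dirac equation ∂ψ₂ + U·ψ₁ = 0 and ∂̄ψ₁ = U·ψ₂ (potentials U = V) if and only if (ψ̃₁, ψ̃₂) satisfies the Zakharov–Shabat system ψ̃₂' + 2u·ψ̃₁ = iλ·ψ̃₂ and −ψ̃₁' + 2u·ψ̃₂ = iλ·ψ̃₁ on ℝ. -/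
open Complex

section Separable

variable {g h : ℝ → ℂ} {z : ℂ}

theorem fderiv_re_mul_im_apply (hg : DifferentiableAt ℝ g z.re) (hh : DifferentiableAt ℝ h z.im)
    (w : ℂ) :
    fderiv ℝ (fun z : ℂ => g z.re * h z.im) z w =
      w.re * deriv g z.re * h z.im + w.im * g z.re * deriv h z.im := by
  have hre : HasFDerivAt (fun z : ℂ => g z.re) _ z :=
    hg.hasDerivAt.hasFDerivAt.comp z reCLM.hasFDerivAt
  have him : HasFDerivAt (fun z : ℂ => h z.im) _ z :=
    hh.hasDerivAt.hasFDerivAt.comp z imCLM.hasFDerivAt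
  rw [(hre.fun_mul him).fderiv]
  simp only [FunLike.coe_add, FunLike.coe_smul, Pi.add_apply, Pi.smul_apply,
    ContinuousLinearMap.comp_apply, reCLM_apply, imCLM_apply,
    ContinuousLinearMap.toSpanSingleton_apply, smul_eq_mul, real_smul]
  ring

theorem wd_re_mul_im (hg : DifferentiableAt ℝ g z.re) (hh : DifferentiableAt ℝ h z.im) :
    wd (fun z : ℂ => g z.re * h z.im) z =
      (deriv g z.re * h z.im - I * g z.re * deriv h z.im) / 2 := by
  simp only [wd, fderiv_re_mul_im_apply hg hh, one_re, one_im, I_re, I_im]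
  push_cast
  ring

theorem wdbar_re_mul_im (hg : DifferentiableAt ℝ g z.re) (hh : DifferentiableAt ℝ h z.im) :
    wdbar (fun z : ℂ => g z.re * h z.im) z =
      (deriv g z.re * h z.im + I * g z.re * deriv h z.im) / 2 := by
  simp only [wdbar, fderiv_re_mul_im_apply hg hh, one_re, one_im, I_re, I_im]
  push_cast
  ring

end Separable

theorem hasDerivAt_cexp_const_mul_ofReal (lam : ℂ) (y : ℝ) :
    HasDerivAt (fun t : ℝ => exp (lam * t)) (lam * exp (lam * y)) y := by
  simpa [mul_comm] using (ofRealCLM.hasDerivAt.const_mul lam).cexp (x := y)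

/-- The Dirac system at one point for `ψⱼ = ψ̃ⱼ · e`, where `e ≠ 0` has `y`-derivative `λ e`. -/
theorem dirac_mul_iff_zakharov_shabat {ψ₁ ψ₂ ψ₁' ψ₂' v lam e : ℂ} (he : e ≠ 0) :
    ((ψ₂' * e - I * ψ₂ * (lam * e)) / 2 + v * (ψ₁ * e) = 0 ∧
        (ψ₁' * e + I * ψ₁ * (lam * e)) / 2 = v * (ψ₂ * e)) ↔
      (ψ₂' + 2 * v * ψ₁ = I * lam * ψ₂ ∧ -ψ₁' + 2 * v * ψ₂ = I * lam * ψ₁) := by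
  refine and_congr ⟨fun h => mul_right_cancel₀ he ?_, fun h => ?_⟩
    ⟨fun h => mul_right_cancel₀ he ?_, fun h => ?_⟩
  · linear_combination 2 * h
  · linear_combination e / 2 * h
  · linear_combination -2 * h
  · linear_combination -e / 2 * h

/-- With `U(z) = u(Re z)` and `ψⱼ(z) = ψ̃ⱼ(Re z)·exp(λ·Im z)`, the pair `(ψ₁, ψ₂)`
solves the Dirac equation `∂ψ₂ + U·ψ₁ = 0`, `∂̄ψ₁ = U·ψ₂` (potentials `U = V`) if and
only if `(ψ̃₁, ψ̃₂)` solves the Zakharov–Shabat system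
`ψ̃₂' + 2u·ψ̃₁ = iλ·ψ̃₂`, `−ψ̃₁' + 2u·ψ̃₂ = iλ·ψ̃₁` on ℝ. -/
theorem dirac_reduces_to_zakharov_shabat
    (u : ℝ → ℂ) (lam : ℂ) (ψt₁ ψt₂ : ℝ → ℂ)
    (h₁ : Differentiable ℝ ψt₁) (h₂ : Differentiable ℝ ψt₂)
    (U : ℂ → ℂ) (hU : ∀ z, U z = u z.re)
    (ψ₁ ψ₂ : ℂ → ℂ)
    (hψ₁ : ∀ z, ψ₁ z = ψt₁ z.re * Complex.exp (lam * z.im))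
    (hψ₂ : ∀ z, ψ₂ z = ψt₂ z.re * Complex.exp (lam * z.im)) :
    (∀ z, wd ψ₂ z + U z * ψ₁ z = 0 ∧ wdbar ψ₁ z = U z * ψ₂ z) ↔
    (∀ x : ℝ, deriv ψt₂ x + 2 * u x * ψt₁ x = Complex.I * lam * ψt₂ x ∧
      -deriv ψt₁ x + 2 * u x * ψt₂ x = Complex.I * lam * ψt₁ x) := by
  obtain rfl : ψ₁ = _ := funext hψ₁
  obtain rfl : ψ₂ = _ := funext hψ₂
  have hexp := hasDerivAt_cexp_const_mul_ofReal lam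
  have hpointwise : ∀ z : ℂ,
      (wd _ z + U z * _ = 0 ∧ wdbar _ z = U z * _) ↔
        (deriv ψt₂ z.re + 2 * u z.re * ψt₁ z.re = I * lam * ψt₂ z.re ∧
          -deriv ψt₁ z.re + 2 * u z.re * ψt₂ z.re = I * lam * ψt₁ z.re) := fun z => by
    rw [wd_re_mul_im (h₂ _) (hexp _).differentiableAt,
      wdbar_re_mul_im (h₁ _) (hexp _).differentiableAt, (hexp _).deriv, hU]
    exact dirac_mul_iff_zakharov_shabat (exp_ne_zero _)
  simp_rw [hpointwise]
  exact ⟨fun H x => by simpa using H x, fun H z => H z.re⟩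
end
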